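/- If z = z(ψ) has no zero entries (cardinality m) and n < m, then z has exactly n sign changes, z_m > 0, and (−1)^n z₁ > 0. -/

import Mathlib

open Finset Matrix

/-- `(a,b)` entry `λ_{τ(a)}^{b+1}`: the matrix `S_τᵀ Λ V`. -/
noncomputable def selLV {m : ℕ} (l : Fin m → ℝ) (n : ℕ) (τ : Finset (Fin m))
    (h : τ.card = n) : Matrix (Fin n) (Fin n) ℝ :=
  Matrix.of fun a b => l (τ.orderEmbOfFin h a) ^ ((b : ℕ) + 1)

/-- The extreme coefficient vector `α_{(τ)} = (S_τᵀ Λ V)⁻¹ 𝟙`. -/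
noncomputable def alphaTau {m : ℕ} (l : Fin m → ℝ) (n : ℕ) (τ : Finset (Fin m))
    (h : τ.card = n) : Fin n → ℝ :=
  (selLV l n τ h)⁻¹ *ᵥ (fun _ => 1)

/-- The matrix `Vᵀ Ψ Λ V`, with `(a,b)` entry `∑ i, λ_i^a ψ_i λ_i^{b+1}`. -/
noncomputable def Bmat {m : ℕ} (l ψ : Fin m → ℝ) (n : ℕ) : Matrix (Fin n) (Fin n) ℝ :=
  Matrix.of fun a b => ∑ i : Fin m, l i ^ (a : ℕ) * ψ i * l i ^ ((b : ℕ) + 1)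

/-- The coefficient map `α(ψ) = (Vᵀ Ψ Λ V)⁻¹ Vᵀ ψ`. -/
noncomputable def alphaMap {m : ℕ} (l ψ : Fin m → ℝ) (n : ℕ) : Fin n → ℝ :=
  (Bmat l ψ n)⁻¹ *ᵥ (fun a => ∑ i : Fin m, l i ^ (a : ℕ) * ψ i)

/-- The shrinkage vector `ω(ψ) = Λ V α(ψ)`. -/
noncomputable def omegaMap {m : ℕ} (l ψ : Fin m → ℝ) (n : ℕ) : Fin m → ℝ :=
  fun i => ∑ j : Fin n, l i ^ ((j : ℕ) + 1) * alphaMap l ψ n j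

/-- The relative residual vector `z(ψ) = 𝟙 - ω(ψ)`. -/
noncomputable def zMap {m : ℕ} (l ψ : Fin m → ℝ) (n : ℕ) : Fin m → ℝ :=
  fun i => 1 - omegaMap l ψ n i

/-- `ψ^τ = ∏_{i∈τ} ψ_i`. -/
def psiPow {m : ℕ} (ψ : Fin m → ℝ) (τ : Finset (Fin m)) : ℝ := ∏ i ∈ τ, ψ i

/-- `π_τ = (∏_{j∈τ} λ_j) ∏_{j<i∈τ} (λ_i - λ_j)²`. -/
def piTau {m : ℕ} (l : Fin m → ℝ) (τ : Finset (Fin m)) : ℝ :=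
  (∏ j ∈ τ, l j) * ∏ j ∈ τ, ∏ i ∈ τ.filter (fun x => j < x), (l i - l j) ^ 2

/-- The number of nonzero entries of a vector. -/
noncomputable def suppCard {m : ℕ} (ψ : Fin m → ℝ) : ℕ :=
  ({i : Fin m | ψ i ≠ 0}).ncard

/-- Number of sign changes of a vector: `v(y) = #{i : y_i y_{i+1} < 0}`. -/
noncomputable def vCount {m : ℕ} (y : Fin m → ℝ) : ℕ :=
  {i : Fin m | ∃ h : (i : ℕ) + 1 < m, y i * y ⟨(i : ℕ) + 1, h⟩ < 0}.ncard

/-- Minimal number of sign changes over full-cardinality completions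
sign-concordant with `x`. -/
noncomputable def vMin {m : ℕ} (x : Fin m → ℝ) : ℕ :=
  sInf {k | ∃ y : Fin m → ℝ, (∀ i, y i ≠ 0) ∧ (∀ i, 0 ≤ x i * y i) ∧ vCount y = k}

/-- Maximal number of sign changes over full-cardinality completions
sign-concordant with `x`. -/
noncomputable def vMax {m : ℕ} (x : Fin m → ℝ) : ℕ :=
  sSup {k | ∃ y : Fin m → ℝ, (∀ i, y i ≠ 0) ∧ (∀ i, 0 ≤ x i * y i) ∧ vCount y = k}


/-!
Write `z_i = P(λ_i)` with `P(x) = 1 - ∑ α_j x^{j+1}`, so `deg P ≤ n` and `P(0) = 1`. The normal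
equations say that `ψ ⊙ z` is orthogonal, on the nodes `λ_i`, to every polynomial of degree `< n`.
If `z` had fewer than `n` sign changes, a polynomial `q` with one root between each pair of
neighbouring nodes where `z` changes sign would make all `ψ_i z_i q(λ_i)` of one sign, contradicting
orthogonality. Conversely every sign change yields a root of `P` in `(λ_{i+1}, λ_i)`, and `z_m < 0`
would yield one more in `(0, λ_m)` since `P(0) = 1`; so there are exactly `n` sign changes and
`z_m > 0`, and the sign of `z_1` follows by parity.
-/

open Polynomial

theorem Polynomial.exists_isRoot_mem_Ioo_of_eval_mul_eval_neg {P : ℝ[X]} {a b : ℝ}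
    (hab : a ≤ b) (h : P.eval a * P.eval b < 0) : ∃ ρ ∈ Set.Ioo a b, P.IsRoot ρ := by
  have h0 : (0 : ℝ) ∈ Set.uIcc (P.eval a) (P.eval b) := by
    rw [Set.mem_uIcc]
    rcases mul_neg_iff.1 h with h | h
    · exact Or.inr ⟨h.2.le, h.1.le⟩
    · exact Or.inl ⟨h.1.le, h.2.le⟩
  obtain ⟨ρ, hρ, hρ0⟩ := intermediate_value_uIcc P.continuous.continuousOn h0
  rw [Set.uIcc_of_le hab] at hρ
  have ha : ρ ≠ a := by rintro rfl; simp [hρ0] at h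
  have hb : ρ ≠ b := by rintro rfl; simp [hρ0] at h
  exact ⟨ρ, ⟨lt_of_le_of_ne hρ.1 ha.symm, lt_of_le_of_ne hρ.2 hb⟩, hρ0⟩

theorem Finset.pos_neg_one_pow_card_filter_neg_mul_prod {ι : Type*} (s : Finset ι) {f : ι → ℝ}
    (hf : ∀ i ∈ s, f i ≠ 0) : 0 < (-1) ^ #{i ∈ s | f i < 0} * ∏ i ∈ s, f i := by
  rw [← prod_filter_mul_prod_filter_not s (fun i => f i < 0), ← mul_assoc, ← prod_neg]
  refine mul_pos (prod_pos fun i hi => ?_) (prod_pos fun i hi => ?_)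
  · exact neg_pos.2 (mem_filter.1 hi).2
  · obtain ⟨his, hi⟩ := mem_filter.1 hi
    exact lt_of_le_of_ne (not_lt.1 hi) (hf i his).symm

section SignChanges

variable {m : ℕ}

noncomputable def signChanges (y : Fin m → ℝ) : Finset (Fin m) :=
  {i | ∃ h : (i : ℕ) + 1 < m, y i * y ⟨i + 1, h⟩ < 0}

theorem vCount_eq_card_signChanges (y : Fin m → ℝ) : vCount y = #(signChanges y) := by
  rw [vCount, ← Set.ncard_coe_finset]
  simp [signChanges]

theorem succ_lt_of_mem_signChanges {y : Fin m → ℝ} {i : Fin m} (hi : i ∈ signChanges y) :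
    (i : ℕ) + 1 < m := by
  obtain ⟨h, -⟩ := (mem_filter.1 hi).2
  exact h

theorem pos_neg_one_pow_card_signChanges_lt_mul (y : Fin m → ℝ) (hy : ∀ i, y i ≠ 0)
    (k : Fin m) : 0 < (-1) ^ #{i ∈ signChanges y | i < k} * (y ⟨0, k.pos⟩ * y k) := by
  obtain ⟨k, hk⟩ := k
  induction k with
  | zero => simpa [Fin.lt_def] using mul_self_pos.2 (hy ⟨0, hk⟩)
  | succ k ih =>
    set s := signChanges y
    set k' : Fin m := ⟨k, by omega⟩
    have hcard : #{i ∈ s | i < ⟨k + 1, hk⟩} = #{i ∈ s | i < k'} + if k' ∈ s then 1 else 0 := by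
      have hsplit : {i ∈ s | i < ⟨k + 1, hk⟩} = {i ∈ s | i < k'} ∪ {i ∈ s | i = k'} := by
        rw [← filter_or]
        refine filter_congr fun i _ => ?_
        simp only [Fin.lt_def, Fin.ext_iff, k']
        omega
      rw [hsplit, card_union_of_disjoint (disjoint_filter.2 fun i _ h => h.ne), filter_eq']
      split_ifs <;> rfl
    have hstep : 0 < (-1) ^ (if k' ∈ s then 1 else 0) * (y k' * y ⟨k + 1, hk⟩) := by
      split_ifs with hmem
      · obtain ⟨_, hneg⟩ := (mem_filter.1 hmem).2
        simpa using hneg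
      · have hnonneg : 0 ≤ y k' * y ⟨k + 1, hk⟩ := by
          by_contra hneg
          exact hmem (mem_filter.2 ⟨mem_univ _, hk, not_le.1 hneg⟩)
        simpa using lt_of_le_of_ne hnonneg (mul_ne_zero (hy _) (hy _)).symm
    have hsq : 0 < y k' * y k' := mul_self_pos.2 (hy k')
    refine pos_of_mul_pos_left ?_ hsq.le
    rw [hcard, pow_add]
    linear_combination mul_pos (ih (by omega)) hstep

theorem pos_neg_one_pow_card_signChanges_mul (y : Fin m → ℝ) (hy : ∀ i, y i ≠ 0) (hm : 0 < m) :
    0 < (-1) ^ #(signChanges y) * (y ⟨0, hm⟩ * y ⟨m - 1, by omega⟩) := by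
  have hlast : {i ∈ signChanges y | i < ⟨m - 1, by omega⟩} = signChanges y := by
    refine filter_true_of_mem fun i hi => ?_
    have := succ_lt_of_mem_signChanges hi
    simp only [Fin.lt_def]
    omega
  simpa [hlast] using pos_neg_one_pow_card_signChanges_lt_mul y hy ⟨m - 1, by omega⟩

end SignChanges

section Nodes

variable {m : ℕ} {l : Fin m → ℝ}

theorem card_signChanges_eval_le_card_roots (hl : StrictAnti l) {P : ℝ[X]} (hP : P ≠ 0)
    (hm : 0 < m) :
    #(signChanges fun i => P.eval (l i)) ≤ #{ρ ∈ P.roots.toFinset | l ⟨m - 1, by omega⟩ < ρ} := by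
  have hroot : ∀ i, ∃ ρ, i ∈ signChanges (fun i => P.eval (l i)) →
      P.IsRoot ρ ∧ ρ < l i ∧ ∀ j, i < j → l j < ρ := by
    intro i
    by_cases hi : i ∈ signChanges fun i => P.eval (l i)
    · obtain ⟨h, hneg⟩ := (mem_filter.1 hi).2
      have hlt : l ⟨i + 1, h⟩ < l i := hl (by simp [Fin.lt_def])
      obtain ⟨ρ, hρ, hρroot⟩ :=
        exists_isRoot_mem_Ioo_of_eval_mul_eval_neg hlt.le (by rwa [mul_comm])
      refine ⟨ρ, fun _ => ⟨hρroot, hρ.2, fun j hj => (hl.antitone ?_).trans_lt hρ.1⟩⟩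
      rw [Fin.le_def]
      exact hj
    · exact ⟨0, fun h => absurd h hi⟩
  choose F hF using hroot
  refine card_le_card_of_injOn F (fun i hi => ?_) (StrictAntiOn.injOn fun i hi j hj hij => ?_)
  · obtain ⟨hFroot, -, hFgt⟩ := hF i hi
    have := succ_lt_of_mem_signChanges (mem_coe.1 hi)
    simp only [coe_filter, Multiset.mem_toFinset, mem_roots hP, Set.mem_ofPred_eq]
    exact ⟨hFroot, hFgt _ (by simp only [Fin.lt_def]; omega)⟩
  · exact (hF j hj).2.1.trans ((hF i hi).2.2 j hij)

theorem card_signChanges_eval_le_natDegree (hl : StrictAnti l) {P : ℝ[X]} (hP : P ≠ 0)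
    (hm : 0 < m) : #(signChanges fun i => P.eval (l i)) ≤ P.natDegree :=
  (card_signChanges_eval_le_card_roots hl hP hm).trans <| (card_filter_le _ _).trans <|
    (Multiset.toFinset_card_le _).trans (card_roots' P)

theorem card_signChanges_eval_lt_natDegree (hl : StrictAnti l) {P : ℝ[X]} (hP : P ≠ 0)
    (hm : 0 < m) (hlast : 0 < l ⟨m - 1, by omega⟩)
    (h0 : P.eval 0 * P.eval (l ⟨m - 1, by omega⟩) < 0) :
    #(signChanges fun i => P.eval (l i)) < P.natDegree := by
  obtain ⟨ρ, hρ, hρroot⟩ := exists_isRoot_mem_Ioo_of_eval_mul_eval_neg hlast.le h0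
  calc #(signChanges fun i => P.eval (l i))
      ≤ #{ρ ∈ P.roots.toFinset | l ⟨m - 1, by omega⟩ < ρ} :=
        card_signChanges_eval_le_card_roots hl hP hm
    _ < #P.roots.toFinset :=
        card_lt_card (filter_ssubset.2 ⟨ρ, by simpa [hP] using hρroot, not_lt.2 hρ.2.le⟩)
    _ ≤ P.natDegree := (Multiset.toFinset_card_le _).trans (card_roots' P)

theorem exists_natDegree_le_neg_one_pow_mul_eval_pos (hl : StrictAnti l) (T : Finset (Fin m))
    (hT : ∀ j ∈ T, (j : ℕ) + 1 < m) :
    ∃ q : ℝ[X], q.natDegree ≤ #T ∧ ∀ k, 0 < (-1) ^ #{j ∈ T | j < k} * q.eval (l k) := by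
  have hcut : ∀ j, ∃ c : ℝ, j ∈ T → ∀ i, (i ≤ j → c < l i) ∧ (j < i → l i < c) := by
    intro j
    by_cases hj : j ∈ T
    · have h := hT j hj
      have hlt : l ⟨j + 1, h⟩ < l j := hl (by simp [Fin.lt_def])
      refine ⟨(l j + l ⟨j + 1, h⟩) / 2, fun _ i => ⟨fun hij => ?_, fun hij => ?_⟩⟩
      · linarith [hl.antitone hij]
      · have : l i ≤ l ⟨j + 1, h⟩ := hl.antitone hij
        linarith
    · exact ⟨0, fun h => absurd h hj⟩
  choose μ hμ using hcut
  refine ⟨∏ j ∈ T, (X - C (μ j)), ?_, fun k => ?_⟩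
  · simp [natDegree_prod_of_monic, monic_X_sub_C]
  have hne : ∀ j ∈ T, l k - μ j ≠ 0 := fun j hj => by
    rcases lt_or_ge j k with h | h
    · linarith [(hμ j hj k).2 h]
    · linarith [(hμ j hj k).1 h]
  have hneg : {j ∈ T | j < k} = {j ∈ T | l k - μ j < 0} := filter_congr fun j hj => by
    refine ⟨fun h => sub_neg.2 ((hμ j hj k).2 h), fun h => lt_of_not_ge fun h' => ?_⟩
    linarith [(hμ j hj k).1 h']
  simpa only [hneg, eval_prod, eval_sub, eval_X, eval_C] using
    pos_neg_one_pow_card_filter_neg_mul_prod T hne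

theorem le_card_signChanges_of_forall_sum_eq_zero (hl : StrictAnti l) {n : ℕ} {y ψ : Fin m → ℝ}
    (hy : ∀ i, y i ≠ 0) (hψ : ∀ i, 0 ≤ ψ i) (hψ0 : ∃ i, ψ i ≠ 0)
    (horth : ∀ q : ℝ[X], q.natDegree < n → ∑ i, ψ i * y i * q.eval (l i) = 0) :
    n ≤ #(signChanges y) := by
  obtain ⟨i₀, hi₀⟩ := hψ0
  by_contra! hlt
  obtain ⟨q, hqdeg, hq⟩ := exists_natDegree_le_neg_one_pow_mul_eval_pos hl (signChanges y)
    fun _ => succ_lt_of_mem_signChanges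
  have hsign : ∀ k, 0 < y ⟨0, i₀.pos⟩ * (y k * q.eval (l k)) := fun k => by
    have hsq : ((-1 : ℝ) ^ #{j ∈ signChanges y | j < k}) ^ 2 = 1 := by
      rw [← pow_mul, pow_mul', neg_one_sq, one_pow]
    linear_combination mul_pos (pos_neg_one_pow_card_signChanges_lt_mul y hy k) (hq k) +
      (y ⟨0, i₀.pos⟩ * (y k * q.eval (l k))) * hsq
  have hpos : 0 < y ⟨0, i₀.pos⟩ * ∑ i, ψ i * y i * q.eval (l i) := by
    rw [mul_sum]
    refine sum_pos' (fun i _ => ?_) ⟨i₀, mem_univ _, ?_⟩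
    · linarith [mul_nonneg (hψ i) (hsign i).le]
    · linarith [mul_pos (lt_of_le_of_ne (hψ i₀) (Ne.symm hi₀)) (hsign i₀)]
  rw [horth q (hqdeg.trans_lt hlt), mul_zero] at hpos
  exact lt_irrefl 0 hpos

end Nodes

theorem sum_mul_eval_eq_zero_of_natDegree_lt {m n : ℕ} {l w : Fin m → ℝ}
    (h : ∀ a < n, ∑ i, w i * l i ^ a = 0) {q : ℝ[X]} (hq : q.natDegree < n) :
    ∑ i, w i * q.eval (l i) = 0 := by
  simp_rw [eval_eq_sum_range, mul_sum]
  rw [sum_comm]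
  refine sum_eq_zero fun a ha => ?_
  simp_rw [mul_left_comm (w _), ← mul_sum]
  rw [h a (by rw [mem_range] at ha; omega), mul_zero]

theorem eq_zero_of_forall_mem_sum_mul_pow_eq_zero {m n : ℕ} {l : Fin m → ℝ}
    (hl : Function.Injective l) {S : Finset (Fin m)} (hS : n ≤ #S) {v : Fin n → ℝ}
    (h : ∀ i ∈ S, ∑ a, v a * l i ^ (a : ℕ) = 0) : v = 0 := by
  obtain ⟨τ, hτS, hτ⟩ := exists_subset_card_eq hS
  exact Matrix.eq_zero_of_forall_index_sum_mul_pow_eq_zero (f := l ∘ τ.orderEmbOfFin hτ)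
    (hl.comp (τ.orderEmbOfFin hτ).injective) fun j => h _ (hτS (τ.orderEmbOfFin_mem hτ j))

section Residual

variable {m n : ℕ} (l ψ : Fin m → ℝ)

theorem suppCard_eq_card_filter : suppCard ψ = #{i | ψ i ≠ 0} := by
  rw [suppCard, ← Set.ncard_coe_finset]
  simp

theorem dotProduct_Bmat_mulVec (v : Fin n → ℝ) :
    v ⬝ᵥ (Bmat l ψ n *ᵥ v) = ∑ i, ψ i * l i * (∑ a, v a * l i ^ (a : ℕ)) ^ 2 := by
  simp only [dotProduct, mulVec, Bmat, of_apply, sq, mul_sum, sum_mul]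
  conv_lhs => arg 2; ext b; rw [sum_comm]
  rw [sum_comm]
  exact sum_congr rfl fun i _ => sum_congr rfl fun b _ => sum_congr rfl fun a _ => by ring

theorem Bmat_det_ne_zero (hpos : ∀ i, 0 < l i) (hl : StrictAnti l) (hψ : ∀ i, 0 ≤ ψ i)
    (hcard : n < suppCard ψ) : (Bmat l ψ n).det ≠ 0 := by
  intro hdet
  obtain ⟨v, hv0, hv⟩ := Matrix.exists_mulVec_eq_zero_iff.2 hdet
  have hterm := (sum_eq_zero_iff_of_nonneg fun i _ =>
    mul_nonneg (mul_nonneg (hψ i) (hpos i).le) (sq_nonneg _)).1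
    (by rw [← dotProduct_Bmat_mulVec, hv, dotProduct_zero])
  refine hv0 (eq_zero_of_forall_mem_sum_mul_pow_eq_zero hl.injective
    (S := {i | ψ i ≠ 0}) ?_ fun i hi => ?_)
  · rw [← suppCard_eq_card_filter]
    exact hcard.le
  · have hψl : 0 < ψ i * l i := mul_pos (lt_of_le_of_ne (hψ i) (mem_filter.1 hi).2.symm) (hpos i)
    exact pow_eq_zero_iff two_ne_zero |>.1
      ((mul_eq_zero.1 (hterm i (mem_univ i))).resolve_left hψl.ne')

theorem sum_psi_mul_zMap_mul_pow_eq_zero (hdet : (Bmat l ψ n).det ≠ 0) :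
    ∀ a < n, ∑ i, ψ i * zMap l ψ n i * l i ^ a = 0 := by
  intro a ha
  have hBα : Bmat l ψ n *ᵥ alphaMap l ψ n = fun b : Fin n => ∑ i, l i ^ (b : ℕ) * ψ i := by
    rw [alphaMap, mulVec_mulVec, mul_nonsing_inv _ (isUnit_iff_ne_zero.2 hdet), one_mulVec]
  have hrow := congrFun hBα ⟨a, ha⟩
  simp only [mulVec, dotProduct, Bmat, of_apply, sum_mul] at hrow
  simp_rw [mul_comm (l _ ^ a) (ψ _)] at hrow
  simp only [zMap, omegaMap, mul_sub, sub_mul, mul_one, sum_sub_distrib, mul_sum, sum_mul]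
  rw [← hrow, sum_comm, sub_eq_zero]
  exact sum_congr rfl fun b _ => sum_congr rfl fun i _ => by ring

theorem le_card_signChanges_zMap (hpos : ∀ i, 0 < l i) (hl : StrictAnti l)
    (hψ : ∀ i, 0 ≤ ψ i) (hcard : n < suppCard ψ) (hz : ∀ i, zMap l ψ n i ≠ 0) :
    n ≤ #(signChanges (zMap l ψ n)) := by
  obtain ⟨i, hi⟩ := card_pos.1 (suppCard_eq_card_filter ψ ▸ (by omega : 0 < suppCard ψ))
  exact le_card_signChanges_of_forall_sum_eq_zero hl hz hψ ⟨i, (mem_filter.1 hi).2⟩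
    fun q hq => sum_mul_eval_eq_zero_of_natDegree_lt
      (sum_psi_mul_zMap_mul_pow_eq_zero l ψ (Bmat_det_ne_zero l ψ hpos hl hψ hcard)) hq

noncomputable def zPoly (l ψ : Fin m → ℝ) (n : ℕ) : ℝ[X] :=
  1 - ∑ j : Fin n, C (alphaMap l ψ n j) * X ^ ((j : ℕ) + 1)

theorem zMap_eq_eval_zPoly : zMap l ψ n = fun i => (zPoly l ψ n).eval (l i) := by
  ext i
  simp only [zMap, omegaMap, zPoly, eval_sub, eval_one, eval_finsetSum, eval_mul, eval_C,
    eval_pow, eval_X, mul_comm]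

theorem eval_zero_zPoly : (zPoly l ψ n).eval 0 = 1 := by
  simp [zPoly, eval_finsetSum]

theorem natDegree_zPoly_le : (zPoly l ψ n).natDegree ≤ n :=
  (natDegree_sub_le _ _).trans <| max_le (by simp) <| natDegree_sum_le_of_forall_le _ _
    fun j _ => (natDegree_C_mul_X_pow_le _ _).trans j.2

end Residual

theorem stmt13 {m n : ℕ} (hnm : n < m) (l : Fin m → ℝ) (hpos : ∀ i, 0 < l i)
    (hanti : StrictAnti l) (ψ : Fin m → ℝ) (hψ : ∀ i, 0 ≤ ψ i)
    (hcard : n < suppCard ψ)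
    (hfull : ∀ i, zMap l ψ n i ≠ 0) :
    vCount (zMap l ψ n) = n ∧
      0 < zMap l ψ n ⟨m - 1, by omega⟩ ∧
      0 < (-1 : ℝ) ^ n * zMap l ψ n ⟨0, by omega⟩ := by
  have hm : 0 < m := by omega
  set z := zMap l ψ n
  set P := zPoly l ψ n
  have hz : z = fun i => P.eval (l i) := zMap_eq_eval_zPoly l ψ
  have hP0 : P.eval 0 = 1 := eval_zero_zPoly l ψ
  have hP : P ≠ 0 := fun h => by simp [h] at hP0
  have hdeg : P.natDegree ≤ n := natDegree_zPoly_le l ψ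
  have hlow : n ≤ #(signChanges z) := le_card_signChanges_zMap l ψ hpos hanti hψ hcard hfull
  have hup : #(signChanges z) ≤ n := by
    rw [hz]
    exact (card_signChanges_eval_le_natDegree hanti hP hm).trans hdeg
  have hcount : #(signChanges z) = n := le_antisymm hup hlow
  have hlast : 0 < z ⟨m - 1, by omega⟩ := by
    by_contra! hnonpos
    have hlt := card_signChanges_eval_lt_natDegree hanti hP hm (hpos _) <| by
      rw [hP0, one_mul, ← congrFun hz]
      exact lt_of_le_of_ne hnonpos (hfull _)
    rw [← hz] at hlt
    omega
  refine ⟨by rw [vCount_eq_card_signChanges, hcount], hlast, ?_⟩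
  have hsign := pos_neg_one_pow_card_signChanges_mul z hfull hm
  rw [hcount, ← mul_assoc] at hsign
  exact pos_of_mul_pos_left hsign hlast.le
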